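/- arXiv:1606.02106 — 2 statements merged into one kernel-verified Lean document; each statement's English description precedes it below -/
import Mathlib

section
/- For p in (0,1) and any λ, β > 0, one has λ^{1-p} ∫₀^{β/λ} e^{-iλs} s^{-p} ds = m(p) + i e^{-iβ} β^{-p} - i p β^{-p} ∫₁^∞ e^{-iβs} s^{-(1+p)} ds. -/
/-!
For `0 < re b` and `-1 < r`, `b ^ (r + 1) * ∫₀^∞ e^{-bt} t^r dt` has zero derivative in `b`
(differentiate under the integral sign, then integrate by parts), so it equals its value
`Γ(r + 1)` at `b = 1`. Splitting this integral at `a` and integrating the tail by parts once more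
gives an identity for `∫₀^a e^{-bt} t^{-p} dt` whose terms all stay continuous on the closed
half-plane `0 ≤ re b` away from `0`, so it also holds at `b = iλ`. The substitution `t = (β/λ) s`
in the tail and `m p = Γ(1 - p) i^{p - 1}` then give the theorem.
-/

open MeasureTheory Filter

noncomputable def m (p : ℝ) : ℂ :=
  -Complex.I * Complex.exp (((p * Real.pi / 2 : ℝ) : ℂ) * Complex.I) * Complex.Gamma (1 - (p : ℂ))

open Set Topology Complex

section

variable {b : ℂ} {r : ℝ}

lemma norm_cexp_neg_mul_rpow (b : ℂ) (r : ℝ) {t : ℝ} (ht : 0 ≤ t) :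
    ‖cexp (-(b * t)) * ((t ^ r : ℝ) : ℂ)‖ = Real.exp (-(b.re * t)) * t ^ r := by
  rw [norm_mul, norm_exp, norm_real, Real.norm_of_nonneg (Real.rpow_nonneg ht r)]
  simp

lemma norm_cexp_neg_mul_rpow_le (hb : 0 ≤ b.re) (r : ℝ) {t : ℝ} (ht : 0 ≤ t) :
    ‖cexp (-(b * t)) * ((t ^ r : ℝ) : ℂ)‖ ≤ t ^ r := by
  rw [norm_cexp_neg_mul_rpow b r ht]
  exact mul_le_of_le_one_left (Real.rpow_nonneg ht r)
    (Real.exp_le_one_iff.mpr (neg_nonpos.mpr (mul_nonneg hb ht)))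

lemma continuousOn_cexp_neg_mul_rpow (b : ℂ) (r : ℝ) :
    ContinuousOn (fun t : ℝ ↦ cexp (-(b * t)) * ((t ^ r : ℝ) : ℂ)) (Ioi 0) :=
  ((continuous_exp.comp (continuous_const.mul continuous_ofReal).neg).continuousOn).mul
    (continuous_ofReal.comp_continuousOn (continuousOn_of_forall_continuousAt fun t ht ↦
      Real.continuousAt_rpow_const t r (Or.inl (ne_of_gt ht))))

lemma integrableOn_cexp_neg_mul_rpow_of_integrableOn_rpow {s : Set ℝ} (hs : MeasurableSet s)
    (hs0 : s ⊆ Ioi 0) (hb : 0 ≤ b.re) (hr : IntegrableOn (fun t : ℝ ↦ t ^ r) s) :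
    IntegrableOn (fun t : ℝ ↦ cexp (-(b * t)) * ((t ^ r : ℝ) : ℂ)) s :=
  hr.mono' (((continuousOn_cexp_neg_mul_rpow b r).mono hs0).aestronglyMeasurable hs)
    ((ae_restrict_iff' hs).mpr (ae_of_all _ fun _ ht ↦
      norm_cexp_neg_mul_rpow_le hb r (le_of_lt (hs0 ht))))

lemma integrableOn_cexp_neg_mul_rpow_Ioi_zero (hb : 0 < b.re) (hr : -1 < r) :
    IntegrableOn (fun t : ℝ ↦ cexp (-(b * t)) * ((t ^ r : ℝ) : ℂ)) (Ioi 0) := by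
  refine Integrable.mono' (g := fun t : ℝ ↦ t ^ r * Real.exp (-b.re * t ^ (1 : ℝ)))
    (integrableOn_rpow_mul_exp_neg_mul_rpow hr one_pos hb)
    ((continuousOn_cexp_neg_mul_rpow b r).aestronglyMeasurable measurableSet_Ioi)
    ((ae_restrict_iff' measurableSet_Ioi).mpr (ae_of_all _ fun t ht ↦ ?_))
  rw [norm_cexp_neg_mul_rpow b r (le_of_lt ht), Real.rpow_one, mul_comm, neg_mul]

lemma continuousOn_integral_cexp_neg_mul_rpow {s : Set ℝ} (hs : MeasurableSet s)
    (hs0 : s ⊆ Ioi 0) (hr : IntegrableOn (fun t : ℝ ↦ t ^ r) s) :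
    ContinuousOn (fun b : ℂ ↦ ∫ t in s, cexp (-(b * t)) * ((t ^ r : ℝ) : ℂ))
      {b | 0 ≤ b.re} :=
  continuousOn_of_dominated
    (fun _ hb ↦ (integrableOn_cexp_neg_mul_rpow_of_integrableOn_rpow hs hs0 hb hr).1)
    (fun _ hb ↦ (ae_restrict_iff' hs).mpr (ae_of_all _ fun _ ht ↦
      norm_cexp_neg_mul_rpow_le hb r (le_of_lt (hs0 ht))))
    hr (ae_of_all _ fun _ ↦
      ((continuous_exp.comp (continuous_id.mul continuous_const).neg).mul
        continuous_const).continuousOn)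

lemma hasDerivAt_neg_inv_mul_cexp_neg_mul_rpow (hb : b ≠ 0) (r : ℝ) {t : ℝ} (ht : 0 < t) :
    HasDerivAt (fun t : ℝ ↦ -b⁻¹ * (cexp (-(b * t)) * ((t ^ r : ℝ) : ℂ)))
      (cexp (-(b * t)) * ((t ^ r : ℝ) : ℂ) - r / b * (cexp (-(b * t)) * ((t ^ (r - 1) : ℝ) : ℂ)))
      t := by
  have hexp : HasDerivAt (fun t : ℝ ↦ cexp (-(b * t))) (cexp (-(b * t)) * -b) t :=
    (((hasDerivAt_id (t : ℂ)).const_mul b).neg.cexp.comp_ofReal).congr_deriv (by simp)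
  have hpow : HasDerivAt (fun t : ℝ ↦ ((t ^ r : ℝ) : ℂ)) ((r * t ^ (r - 1) : ℝ) : ℂ) t :=
    (Real.hasDerivAt_rpow_const (Or.inl ht.ne')).ofReal_comp
  refine ((hexp.mul hpow).const_mul (-b⁻¹)).congr_deriv ?_
  push_cast
  field_simp
  ring

lemma tendsto_cexp_neg_mul_rpow_atTop (hb : 0 < b.re) (r : ℝ) :
    Tendsto (fun t : ℝ ↦ cexp (-(b * t)) * ((t ^ r : ℝ) : ℂ)) atTop (𝓝 0) := by
  refine squeeze_zero_norm' ?_ (tendsto_rpow_mul_exp_neg_mul_atTop_nhds_zero r b.re hb)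
  filter_upwards [eventually_ge_atTop 0] with t ht
  rw [norm_cexp_neg_mul_rpow b r ht, mul_comm, neg_mul]

lemma integral_Ioi_cexp_neg_mul_rpow_eq_add {a : ℝ} (hb : 0 < b.re) (ha : 0 ≤ a)
    (h : a ≠ 0 ∨ 0 ≤ r)
    (hint : IntegrableOn (fun t : ℝ ↦ cexp (-(b * t)) * ((t ^ r : ℝ) : ℂ)) (Ioi a))
    (hint' : IntegrableOn (fun t : ℝ ↦ cexp (-(b * t)) * ((t ^ (r - 1) : ℝ) : ℂ)) (Ioi a)) :
    ∫ t in Ioi a, cexp (-(b * t)) * ((t ^ r : ℝ) : ℂ)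
      = b⁻¹ * cexp (-(b * a)) * ((a ^ r : ℝ) : ℂ)
        + r / b * ∫ t in Ioi a, cexp (-(b * t)) * ((t ^ (r - 1) : ℝ) : ℂ) := by
  have hb0 : b ≠ 0 := fun h0 ↦ by simp [h0] at hb
  have hcont : ContinuousWithinAt (fun t : ℝ ↦ -b⁻¹ * (cexp (-(b * t)) * ((t ^ r : ℝ) : ℂ)))
      (Ici a) a :=
    (continuousAt_const.mul
      ((continuous_exp.comp (continuous_const.mul continuous_ofReal).neg).continuousAt.mul
        (continuous_ofReal.continuousAt.comp
          (Real.continuousAt_rpow_const a r h)))).continuousWithinAt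
  have hftc := integral_Ioi_of_hasDerivAt_of_tendsto hcont
    (fun t ht ↦ hasDerivAt_neg_inv_mul_cexp_neg_mul_rpow hb0 r (ha.trans_lt ht))
    (hint.sub (hint'.const_mul _))
    (by simpa using (tendsto_cexp_neg_mul_rpow_atTop hb r).const_mul (-b⁻¹))
  rw [integral_sub hint (hint'.const_mul _), integral_const_mul] at hftc
  linear_combination hftc

lemma hasDerivAt_integral_cexp_neg_mul_rpow (hb : 0 < b.re) (hr : -1 < r) :
    HasDerivAt (fun z : ℂ ↦ ∫ t in Ioi (0 : ℝ), cexp (-(z * t)) * ((t ^ r : ℝ) : ℂ))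
      (-((r + 1) / b) * ∫ t in Ioi (0 : ℝ), cexp (-(b * t)) * ((t ^ r : ℝ) : ℂ)) b := by
  have hb2 : 0 < b.re / 2 := half_pos hb
  have hre : ∀ z ∈ Metric.ball b (b.re / 2), b.re / 2 ≤ z.re := fun z hz ↦ by
    have := (abs_le.mp ((abs_re_le_norm (z - b)).trans (mem_ball_iff_norm.mp hz).le)).1
    simp only [sub_re] at this
    linarith
  obtain ⟨-, hderiv⟩ := hasDerivAt_integral_of_dominated_loc_of_deriv_le
    (F' := fun z t ↦ -(cexp (-(z * t)) * ((t ^ (r + 1) : ℝ) : ℂ)))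
    (bound := fun t ↦ t ^ (r + 1) * Real.exp (-(b.re / 2) * t ^ (1 : ℝ)))
    (Metric.ball_mem_nhds b hb2)
    (Eventually.of_forall fun z ↦
      (continuousOn_cexp_neg_mul_rpow z r).aestronglyMeasurable measurableSet_Ioi)
    (integrableOn_cexp_neg_mul_rpow_Ioi_zero hb hr)
    ((continuousOn_cexp_neg_mul_rpow b (r + 1)).aestronglyMeasurable measurableSet_Ioi).neg
    ((ae_restrict_iff' measurableSet_Ioi).mpr (ae_of_all _ fun t ht z hz ↦ by
      rw [norm_neg, norm_cexp_neg_mul_rpow z _ (le_of_lt ht), Real.rpow_one, mul_comm]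
      have ht0 : (0 : ℝ) < t := ht
      gcongr
      nlinarith [hre z hz]))
    (integrableOn_rpow_mul_exp_neg_mul_rpow (by linarith) one_pos hb2)
    ((ae_restrict_iff' measurableSet_Ioi).mpr (ae_of_all _ fun t ht z _ ↦ by
      have := ((((hasDerivAt_id z).mul_const (t : ℂ)).neg).cexp).mul_const ((t ^ r : ℝ) : ℂ)
      refine this.congr_deriv ?_
      simp only [Pi.neg_apply, id, one_mul]
      rw [Real.rpow_add_one (ne_of_gt ht)]
      push_cast
      ring))
  have hibp := integral_Ioi_cexp_neg_mul_rpow_eq_add (r := r + 1) hb le_rfl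
    (Or.inr (by linarith))
    (integrableOn_cexp_neg_mul_rpow_Ioi_zero hb (by linarith))
    (by simpa using integrableOn_cexp_neg_mul_rpow_Ioi_zero hb hr)
  rw [integral_neg, hibp] at hderiv
  refine hderiv.congr_deriv ?_
  rw [Real.zero_rpow (by linarith : r + 1 ≠ 0), add_sub_cancel_right]
  push_cast
  ring

theorem integral_cexp_neg_mul_rpow_Ioi_zero (hb : 0 < b.re) (hr : -1 < r) :
    ∫ t in Ioi (0 : ℝ), cexp (-(b * t)) * ((t ^ r : ℝ) : ℂ)
      = Gamma (r + 1) * b ^ (-(r + 1 : ℂ)) := by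
  set F := fun z : ℂ ↦ ∫ t in Ioi (0 : ℝ), cexp (-(z * t)) * ((t ^ r : ℝ) : ℂ)
  have hF1 : F 1 = Gamma (r + 1) := by
    rw [Gamma_eq_integral (by simp; linarith), GammaIntegral]
    refine setIntegral_congr_fun measurableSet_Ioi fun t ht ↦ ?_
    rw [ofReal_cpow (le_of_lt ht), add_sub_cancel_right, one_mul, ofReal_exp, ofReal_neg]
  have hderiv : ∀ z ∈ {z : ℂ | 0 < z.re}, HasDerivAt (fun z ↦ z ^ (r + 1 : ℂ) * F z) 0 z := by
    intro z hz
    have hz0 : z ≠ 0 := fun h0 ↦ by simp [h0] at hz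
    refine (((hasDerivAt_id z).cpow_const (Or.inl hz)).mul
      (hasDerivAt_integral_cexp_neg_mul_rpow hz hr)).congr_deriv ?_
    rw [id, add_sub_cancel_right, cpow_add _ _ hz0, cpow_one]
    field_simp
    ring
  have hconst : b ^ (r + 1 : ℂ) * F b = (1 : ℂ) ^ (r + 1 : ℂ) * F 1 :=
    (isOpen_lt continuous_const continuous_re).is_const_of_deriv_eq_zero
      (convex_halfSpace_re_gt 0).isPreconnected
      (fun z hz ↦ (hderiv z hz).differentiableAt.differentiableWithinAt)
      (fun z hz ↦ (hderiv z hz).deriv) hb (by simp)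
  rw [one_cpow, one_mul, hF1] at hconst
  have hb0 : b ^ (r + 1 : ℂ) ≠ 0 := cpow_ne_zero_iff.mpr (Or.inl fun h0 ↦ by simp [h0] at hb)
  rw [cpow_neg, ← hconst, mul_comm, inv_mul_cancel_left₀ hb0]

variable {p a : ℝ}

lemma integral_Ioc_cexp_neg_mul_rpow_of_re_pos (hp : 0 < p) (hp1 : p < 1) (hb : 0 < b.re)
    (ha : 0 < a) :
    ∫ t in Ioc 0 a, cexp (-(b * t)) * ((t ^ (-p) : ℝ) : ℂ)
      = Gamma (1 - p) * b ^ ((p : ℂ) - 1) - b⁻¹ * cexp (-(b * a)) * ((a ^ (-p) : ℝ) : ℂ)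
        + p / b * ∫ t in Ioi a, cexp (-(b * t)) * ((t ^ (-p - 1) : ℝ) : ℂ) := by
  have hint := integrableOn_cexp_neg_mul_rpow_Ioi_zero hb (by linarith : -1 < -p)
  have hsplit := setIntegral_union (Ioc_disjoint_Ioi le_rfl) measurableSet_Ioi
    (hint.mono_set Ioc_subset_Ioi_self) (hint.mono_set (Ioi_subset_Ioi ha.le))
  rw [Ioc_union_Ioi_eq_Ioi ha.le, integral_cexp_neg_mul_rpow_Ioi_zero hb (by linarith),
    integral_Ioi_cexp_neg_mul_rpow_eq_add hb ha.le (Or.inl ha.ne')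
      (hint.mono_set (Ioi_subset_Ioi ha.le))
      (integrableOn_cexp_neg_mul_rpow_of_integrableOn_rpow measurableSet_Ioi
        (Ioi_subset_Ioi ha.le) hb.le (integrableOn_Ioi_rpow_of_lt (by linarith) ha))] at hsplit
  rw [show ((-p : ℝ) : ℂ) + 1 = 1 - p by push_cast; ring,
    show -((1 : ℂ) - p) = p - 1 by ring] at hsplit
  push_cast at hsplit ⊢
  linear_combination -hsplit

theorem integral_Ioc_cexp_neg_mul_rpow (hp : 0 < p) (hp1 : p < 1) (hb : 0 ≤ b.re) (hb0 : b ≠ 0)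
    (ha : 0 < a) :
    ∫ t in Ioc 0 a, cexp (-(b * t)) * ((t ^ (-p) : ℝ) : ℂ)
      = Gamma (1 - p) * b ^ ((p : ℂ) - 1) - b⁻¹ * cexp (-(b * a)) * ((a ^ (-p) : ℝ) : ℂ)
        + p / b * ∫ t in Ioi a, cexp (-(b * t)) * ((t ^ (-p - 1) : ℝ) : ℂ) := by
  set S : Set ℂ := {z | 0 ≤ z.re ∧ z ≠ 0}
  have hS : S ⊆ {z | 0 ≤ z.re} := fun z hz ↦ hz.1
  have hcont_head := (continuousOn_integral_cexp_neg_mul_rpow measurableSet_Ioc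
    Ioc_subset_Ioi_self ((intervalIntegrable_iff_integrableOn_Ioc_of_le ha.le).mp
      (intervalIntegral.intervalIntegrable_rpow' (by linarith : -1 < -p)))).mono hS
  have hcont_tail := (continuousOn_integral_cexp_neg_mul_rpow measurableSet_Ioi
    (Ioi_subset_Ioi ha.le) (integrableOn_Ioi_rpow_of_lt (by linarith : -p - 1 < -1) ha)).mono hS
  have hslit : ∀ z ∈ S, z ∈ slitPlane := fun z hz ↦ by
    rcases hz.1.lt_or_eq with h | h
    · exact Or.inl h
    · exact Or.inr fun him ↦ hz.2 (ext h.symm him)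
  refine EqOn.of_subset_closure (s := {z : ℂ | 0 < z.re}) (t := S)
    (fun z (hz : 0 < z.re) ↦ integral_Ioc_cexp_neg_mul_rpow_of_re_pos hp hp1 hz ha) hcont_head ?_
    (fun z (hz : 0 < z.re) ↦ ⟨le_of_lt hz, fun h ↦ by simp [h] at hz⟩)
    (by rw [closure_setOfPred_lt_re]; exact hS) ⟨hb, hb0⟩
  exact ((continuousOn_const.mul (continuousOn_id.cpow_const hslit)).sub
    (((continuousOn_inv₀.mono fun z hz ↦ hz.2).mul
      (continuous_exp.comp (continuous_id.mul continuous_const).neg).continuousOn).mul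
        continuousOn_const)).add
    ((continuousOn_const.div continuousOn_id fun z hz ↦ hz.2).mul hcont_tail)

lemma integral_Ioi_cexp_neg_mul_rpow_eq_rpow_mul (b : ℂ) (r : ℝ) {c : ℝ} (hc : 0 < c) :
    ∫ t in Ioi c, cexp (-(b * t)) * ((t ^ r : ℝ) : ℂ)
      = ((c ^ (r + 1) : ℝ) : ℂ) * ∫ s in Ioi (1 : ℝ), cexp (-(b * c * s)) * ((s ^ r : ℝ) : ℂ) := by
  have hscale : ∫ s in Ioi (1 : ℝ), cexp (-(b * ↑(c * s))) * (((c * s) ^ r : ℝ) : ℂ)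
      = ((c ^ r : ℝ) : ℂ) * ∫ s in Ioi (1 : ℝ), cexp (-(b * c * s)) * ((s ^ r : ℝ) : ℂ) := by
    rw [← integral_const_mul]
    refine setIntegral_congr_fun measurableSet_Ioi fun s hs ↦ ?_
    rw [Real.mul_rpow hc.le (zero_le_one.trans (le_of_lt hs))]
    push_cast
    rw [← mul_assoc b]
    ring
  rw [integral_comp_mul_left_Ioi (fun t : ℝ ↦ cexp (-(b * t)) * ((t ^ r : ℝ) : ℂ)) 1 hc,
    mul_one, real_smul, ofReal_inv] at hscale
  rw [Real.rpow_add_one hc.ne', ofReal_mul, mul_comm ((c ^ r : ℝ) : ℂ), mul_assoc, ← hscale,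
    mul_inv_cancel_left₀ (ofReal_ne_zero.mpr hc.ne')]

end

lemma mul_ofReal_cpow {z : ℂ} (hz : z ≠ 0) {c : ℝ} (hc : 0 < c) (w : ℂ) :
    (z * c) ^ w = z ^ w * (c : ℂ) ^ w := by
  have hc0 : (c : ℂ) ≠ 0 := ofReal_ne_zero.mpr hc.ne'
  rw [cpow_def_of_ne_zero (mul_ne_zero hz hc0), cpow_def_of_ne_zero hz, cpow_def_of_ne_zero hc0,
    log_mul_ofReal c hc z hz, ofReal_log hc.le, add_mul, exp_add, mul_comm]

lemma m_eq_Gamma_mul_I_cpow (p : ℝ) : m p = Gamma (1 - p) * I ^ ((p : ℂ) - 1) := by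
  rw [m, cpow_def_of_ne_zero I_ne_zero, log_I,
    show (Real.pi : ℂ) / 2 * I * ((p : ℂ) - 1)
      = ((p * Real.pi / 2 : ℝ) : ℂ) * I + -(Real.pi : ℂ) / 2 * I by push_cast; ring,
    exp_add, exp_neg_pi_div_two_mul_I]
  ring

theorem stmt1 (p lam β : ℝ) (hp : 0 < p) (hp1 : p < 1) (hlam : 0 < lam) (hβ : 0 < β) :
    ((lam ^ (1 - p) : ℝ) : ℂ) * ∫ s in (0:ℝ)..(β / lam),
        Complex.exp (-Complex.I * lam * s) * ((s ^ (-p) : ℝ) : ℂ)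
      = m p + Complex.I * Complex.exp (-Complex.I * β) / ((β ^ p : ℝ) : ℂ)
        - Complex.I * (p : ℂ) / ((β ^ p : ℝ) : ℂ) *
          ∫ s in Set.Ioi (1:ℝ),
            Complex.exp (-Complex.I * β * s) * ((s ^ (-(1 + p)) : ℝ) : ℂ) := by
  have hβlam : 0 < β / lam := div_pos hβ hlam
  have hlamC : (lam : ℂ) ≠ 0 := ofReal_ne_zero.mpr hlam.ne'
  have hIβ : I * lam * (β / lam : ℝ) = I * β := by push_cast; field_simp
  simp only [neg_mul]
  rw [intervalIntegral.integral_of_le hβlam.le,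
    integral_Ioc_cexp_neg_mul_rpow hp hp1 (by simp) (mul_ne_zero I_ne_zero hlamC) hβlam,
    integral_Ioi_cexp_neg_mul_rpow_eq_rpow_mul _ _ hβlam, hIβ,
    show -p - 1 + 1 = -p by ring, show -(1 + p) = -p - 1 by ring,
    mul_ofReal_cpow I_ne_zero hlam, m_eq_Gamma_mul_I_cpow,
    show (p : ℂ) - 1 = ((p - 1 : ℝ) : ℂ) by push_cast; ring, ← ofReal_cpow hlam.le,
    Real.rpow_sub hlam, Real.rpow_sub hlam, Real.rpow_one, Real.rpow_neg hβlam.le,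
    Real.div_rpow hβ.le hlam.le]
  have hu : ((lam ^ p : ℝ) : ℂ) ≠ 0 := ofReal_ne_zero.mpr (Real.rpow_pos_of_pos hlam p).ne'
  have hv : ((β ^ p : ℝ) : ℂ) ≠ 0 := ofReal_ne_zero.mpr (Real.rpow_pos_of_pos hβ p).ne'
  push_cast
  field_simp
  ring_nf
  rw [I_sq]
  ring
end

section
/- Let f ∈ L¹(ℝ⁺) be absolutely continuous on (0,∞) with f' ∈ L¹(ℝ⁺), and suppose f(s) → ℓ as s → 0⁺. Then λ ∫₀^∞ e^{-iλs} f(s) ds → -iℓ as λ → ∞. -/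
/-!
Write `L h (c) = ∫₀^∞ e^{-cs} h(s) ds`, so that the half-line Fourier transform is `L h (iλ)`.
Since `f(s) = ℓ + ∫₀ˢ f'` for `s > 0`, Fubini gives `c L f (c) = ℓ + L f' (c)` for `Re c > 0`.
Both sides are continuous on `Re c ≥ 0` because `f, f' ∈ L¹(ℝ⁺)`, so at `c = iλ` the identity reads
`λ L f (iλ) = -i (ℓ + L f' (iλ))`, and `L f' (iλ) → 0` by the Riemann–Lebesgue lemma.
-/

open MeasureTheory Filter Set Complex

theorem eq_add_intervalIntegral_of_tendsto_nhdsGT {E : Type*} [NormedAddCommGroup E]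
    [NormedSpace ℝ E] [CompleteSpace E] {f f' : ℝ → E} {ℓ : E}
    (hAC : ∀ a b : ℝ, 0 < a → a ≤ b → f b - f a = ∫ s in a..b, f' s)
    (hf' : IntegrableOn f' (Ioi 0)) (hlim : Tendsto f (nhdsWithin 0 (Ioi 0)) (nhds ℓ))
    {s : ℝ} (hs : 0 < s) : f s = ℓ + ∫ t in 0..s, f' t := by
  have hint : IntegrableOn f' (uIcc 0 s) := by
    rw [uIcc_of_le hs.le, integrableOn_Icc_iff_integrableOn_Ioc]
    exact hf'.mono_set Ioc_subset_Ioi_self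
  have hprim : Tendsto (fun a => f s - ∫ t in a..s, f' t) (nhdsWithin 0 (Ioi 0))
      (nhds (f s - ∫ t in 0..s, f' t)) := by
    refine tendsto_const_nhds.sub ?_
    have := intervalIntegral.continuousOn_primitive_interval_left hint 0 left_mem_uIcc
    rw [uIcc_of_le hs.le] at this
    exact (this.mono_of_mem_nhdsWithin (Icc_mem_nhdsGT hs)).tendsto
  have hev : f =ᶠ[nhdsWithin 0 (Ioi 0)] fun a => f s - ∫ t in a..s, f' t := by
    filter_upwards [Ioo_mem_nhdsGT hs] with a ha
    rw [← hAC a s ha.1 ha.2.le, sub_sub_cancel]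
  rw [tendsto_nhds_unique hlim (hprim.congr' hev.symm), sub_add_cancel]

theorem norm_cexp_neg_mul_ofReal (c : ℂ) (s : ℝ) :
    ‖cexp (-c * s)‖ = Real.exp (-c.re * s) := by
  simp [Complex.norm_exp, Complex.mul_re]

theorem integrableOn_cexp_neg_mul_Ioi {c : ℂ} (hc : 0 < c.re) (a : ℝ) :
    IntegrableOn (fun s : ℝ => cexp (-c * s)) (Ioi a) :=
  integrableOn_exp_mul_complex_Ioi (by simpa using hc) a

theorem integral_cexp_neg_mul_Ioi {c : ℂ} (hc : 0 < c.re) (a : ℝ) :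
    ∫ s in Ioi a, cexp (-c * s) = cexp (-c * a) / c := by
  rw [integral_exp_mul_complex_Ioi (by simpa using hc), div_neg, neg_div, neg_neg]

noncomputable def laplaceTransform (h : ℝ → ℂ) (c : ℂ) : ℂ :=
  ∫ s in Ioi (0 : ℝ), cexp (-c * s) * h s

section Primitive

variable {g : ℝ → ℂ} {c : ℂ}

noncomputable def primitiveLaplaceIntegrand (g : ℝ → ℂ) (c : ℂ) (p : ℝ × ℝ) : ℂ :=
  {p : ℝ × ℝ | p.2 ≤ p.1}.indicator (fun p => cexp (-c * p.1) * g p.2) p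

theorem integrable_primitiveLaplaceIntegrand (hg : IntegrableOn g (Ioi 0)) (hc : 0 < c.re) :
    Integrable (primitiveLaplaceIntegrand g c)
      ((volume.restrict (Ioi 0)).prod (volume.restrict (Ioi 0))) := by
  have hexp : IntegrableOn (fun s : ℝ => Real.exp (-c.re * s)) (Ioi 0) :=
    integrableOn_exp_mul_Ioi (neg_neg_of_pos hc) 0
  refine (hexp.mul_prod hg.norm).mono' ?_ (Eventually.of_forall fun p => ?_)
  · refine AEStronglyMeasurable.indicator ?_ (measurableSet_le measurable_snd measurable_fst)
    exact (Continuous.aestronglyMeasurable (by fun_prop)).mul hg.aestronglyMeasurable.comp_snd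
  · by_cases hp : p.2 ≤ p.1
    · rw [primitiveLaplaceIntegrand, indicator_of_mem (show p ∈ {p : ℝ × ℝ | p.2 ≤ p.1} from hp),
        norm_mul, norm_cexp_neg_mul_ofReal]
    · rw [primitiveLaplaceIntegrand,
        indicator_of_notMem (show p ∉ {p : ℝ × ℝ | p.2 ≤ p.1} from hp), norm_zero]
      positivity

theorem setIntegral_primitiveLaplaceIntegrand_fixed_fst {s : ℝ} (hs : 0 < s) :
    ∫ t in Ioi 0, primitiveLaplaceIntegrand g c (s, t) = cexp (-c * s) * ∫ t in 0..s, g t := by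
  have hslice : (fun t => primitiveLaplaceIntegrand g c (s, t))
      = (Iic s).indicator fun t => cexp (-c * s) * g t := by
    ext t; simp [primitiveLaplaceIntegrand, indicator_apply]
  rw [hslice, integral_indicator measurableSet_Iic, Measure.restrict_restrict measurableSet_Iic,
    Iic_inter_Ioi, integral_const_mul, intervalIntegral.integral_of_le hs.le]

theorem setIntegral_primitiveLaplaceIntegrand_fixed_snd (hc : 0 < c.re) {t : ℝ} (ht : 0 < t) :
    ∫ s in Ioi 0, primitiveLaplaceIntegrand g c (s, t) = cexp (-c * t) / c * g t := by
  have hslice : (fun s => primitiveLaplaceIntegrand g c (s, t))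
      = (Ici t).indicator fun s => cexp (-c * s) * g t := by
    ext s; simp [primitiveLaplaceIntegrand, indicator_apply]
  rw [hslice, integral_indicator measurableSet_Ici, Measure.restrict_restrict measurableSet_Ici,
    inter_eq_left.mpr (Ici_subset_Ioi.mpr ht), integral_mul_const, integral_Ici_eq_integral_Ioi,
    integral_cexp_neg_mul_Ioi hc]

theorem mul_laplaceTransform_intervalIntegral (hg : IntegrableOn g (Ioi 0)) (hc : 0 < c.re) :
    c * laplaceTransform (fun s => ∫ t in 0..s, g t) c = laplaceTransform g c := by
  have hc0 : c ≠ 0 := fun h => by simp [h] at hc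
  calc c * laplaceTransform (fun s => ∫ t in 0..s, g t) c
      = c * ∫ s in Ioi 0, ∫ t in Ioi 0, primitiveLaplaceIntegrand g c (s, t) := by
        rw [laplaceTransform, setIntegral_congr_fun measurableSet_Ioi
          fun s hs => setIntegral_primitiveLaplaceIntegrand_fixed_fst hs]
    _ = c * ∫ t in Ioi 0, ∫ s in Ioi 0, primitiveLaplaceIntegrand g c (s, t) := by
        rw [integral_integral_swap (f := fun s t => primitiveLaplaceIntegrand g c (s, t))
          (integrable_primitiveLaplaceIntegrand hg hc)]
    _ = laplaceTransform g c := by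
        rw [setIntegral_congr_fun measurableSet_Ioi
          fun t ht => setIntegral_primitiveLaplaceIntegrand_fixed_snd hc ht, laplaceTransform,
          ← integral_const_mul]
        congr 1
        funext t
        field_simp

end Primitive

section Transform

variable {h : ℝ → ℂ} {c : ℂ}

theorem norm_cexp_neg_mul_le_one (hc : 0 ≤ c.re) {s : ℝ} (hs : 0 < s) : ‖cexp (-c * s)‖ ≤ 1 := by
  rw [norm_cexp_neg_mul_ofReal, Real.exp_le_one_iff, neg_mul, neg_nonpos]
  positivity

theorem integrableOn_cexp_neg_mul_mul (hh : IntegrableOn h (Ioi 0)) (hc : 0 ≤ c.re) :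
    IntegrableOn (fun s : ℝ => cexp (-c * s) * h s) (Ioi 0) := by
  refine hh.bdd_mul (c := 1) (Continuous.aestronglyMeasurable (by fun_prop)) ?_
  filter_upwards [ae_restrict_mem measurableSet_Ioi] with s hs
  exact norm_cexp_neg_mul_le_one hc hs

theorem continuousOn_laplaceTransform (hh : IntegrableOn h (Ioi 0)) :
    ContinuousOn (laplaceTransform h) {c | 0 ≤ c.re} := by
  refine continuousOn_of_dominated (bound := fun s => ‖h s‖)
    (fun c _ => (Continuous.aestronglyMeasurable (by fun_prop)).mul hh.aestronglyMeasurable)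
    (fun c hc => ?_) hh.norm (Eventually.of_forall fun s => Continuous.continuousOn (by fun_prop))
  filter_upwards [ae_restrict_mem measurableSet_Ioi] with s hs
  rw [norm_mul]
  exact mul_le_of_le_one_left (norm_nonneg _) (norm_cexp_neg_mul_le_one hc hs)

theorem tendsto_laplaceTransform_I_mul_atTop (h : ℝ → ℂ) :
    Tendsto (fun lam : ℝ => laplaceTransform h (I * lam)) atTop (nhds 0) := by
  have hscale : Tendsto (fun lam : ℝ => lam / (2 * Real.pi)) atTop (cocompact ℝ) := by
    rw [cocompact_eq_atBot_atTop]
    exact (tendsto_id.atTop_div_const Real.two_pi_pos).mono_right le_sup_right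
  refine ((Real.zero_at_infty_fourier ((Ioi 0).indicator h)).comp hscale).congr fun lam => ?_
  rw [Function.comp_apply, Real.fourier_real_eq_integral_exp_smul, laplaceTransform,
    ← integral_indicator measurableSet_Ioi]
  congr 1
  funext s
  by_cases hs : s ∈ Ioi (0 : ℝ)
  · simp only [indicator_of_mem hs, smul_eq_mul]
    congr 2
    push_cast
    field_simp
  · simp [indicator_of_notMem hs]

variable {F G : ℝ → ℂ} {ℓ : ℂ}

theorem mul_laplaceTransform_eq_add_of_re_pos (hF : IntegrableOn F (Ioi 0))
    (hG : IntegrableOn G (Ioi 0)) (hFG : ∀ s ∈ Ioi 0, F s = ℓ + ∫ t in 0..s, G t)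
    (hc : 0 < c.re) : c * laplaceTransform F c = ℓ + laplaceTransform G c := by
  have hc0 : c ≠ 0 := fun h => by simp [h] at hc
  have hprim : laplaceTransform (fun s => ∫ t in 0..s, G t) c
      = laplaceTransform F c - ℓ / c := by
    rw [laplaceTransform, setIntegral_congr_fun measurableSet_Ioi
      (g := fun s : ℝ => cexp (-c * s) * F s - cexp (-c * s) * ℓ) fun s hs => by
        simp only [hFG s hs]; ring,
      integral_sub (integrableOn_cexp_neg_mul_mul hF hc.le)
        ((integrableOn_cexp_neg_mul_Ioi hc 0).mul_const ℓ),
      integral_mul_const, integral_cexp_neg_mul_Ioi hc, laplaceTransform]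
    simp only [Complex.ofReal_zero, mul_zero, Complex.exp_zero]
    ring
  rw [← mul_laplaceTransform_intervalIntegral hG hc, hprim]
  field_simp
  ring

theorem mul_laplaceTransform_eq_add (hF : IntegrableOn F (Ioi 0))
    (hG : IntegrableOn G (Ioi 0)) (hFG : ∀ s ∈ Ioi 0, F s = ℓ + ∫ t in 0..s, G t)
    (hc : 0 ≤ c.re) : c * laplaceTransform F c = ℓ + laplaceTransform G c :=
  EqOn.of_subset_closure (s := {c : ℂ | 0 < c.re})
    (fun c hc => mul_laplaceTransform_eq_add_of_re_pos (c := c) hF hG hFG hc)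
    (continuousOn_id.mul (continuousOn_laplaceTransform hF))
    (continuousOn_const.add (continuousOn_laplaceTransform hG))
    (fun _ hc => le_of_lt (α := ℝ) hc) (by rw [closure_setOfPred_lt_re]) hc

end Transform

theorem stmt5 (f f' : ℝ → ℝ) (ℓ : ℝ)
    (hf : IntegrableOn f (Set.Ioi 0))
    (hAC : ∀ a b : ℝ, 0 < a → a ≤ b → f b - f a = ∫ s in a..b, f' s)
    (hf' : IntegrableOn f' (Set.Ioi 0))
    (hlim : Tendsto f (nhdsWithin 0 (Set.Ioi 0)) (nhds ℓ)) :
    Tendsto (fun lam : ℝ => (lam : ℂ) *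
        ∫ s in Set.Ioi (0:ℝ), Complex.exp (-Complex.I * lam * s) * (f s : ℂ))
      atTop (nhds (-Complex.I * ℓ)) := by
  have hprim : ∀ s ∈ Ioi (0 : ℝ), (f s : ℂ) = ℓ + ∫ t in 0..s, (f' t : ℂ) := fun s hs => by
    rw [eq_add_intervalIntegral_of_tendsto_nhdsGT hAC hf' hlim hs, intervalIntegral.integral_ofReal]
    push_cast
    rfl
  have hidentity : ∀ lam : ℝ, (lam : ℂ) * laplaceTransform (fun s => (f s : ℂ)) (I * lam)
      = -I * (ℓ + laplaceTransform (fun s => (f' s : ℂ)) (I * lam)) := fun lam => by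
    rw [← mul_laplaceTransform_eq_add (F := fun s => (f s : ℂ)) (G := fun s => (f' s : ℂ))
      hf.ofReal hf'.ofReal hprim (by simp), ← mul_assoc, ← mul_assoc, neg_mul, I_mul_I, neg_neg,
      one_mul]
  have hlimit := (tendsto_laplaceTransform_I_mul_atTop (fun s => (f' s : ℂ))).const_add
    (ℓ : ℂ) |>.const_mul (-I)
  rw [add_zero] at hlimit
  refine hlimit.congr fun lam => ?_
  rw [← hidentity, laplaceTransform]
  simp only [neg_mul]
end
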